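/- With the hypotheses of the resonant submultialgebra theorem, suppose additionally each S_p has a partition S_p = Ŝ_p ∪ Š_p with Ŝ_p ∩ Š_p = ∅ and Ŝ_{p_1}·Š_{p_2}⋯Š_{p_n} ⊆ ∩_{r∈i_{(p_1,...,p_n)}} Ŝ_r. Define Ĝ_R = ⊕_p Ŝ_p⊗V_p and Ǧ_R = ⊕_p Š_p⊗V_p. Then [Ĝ_R, Ǧ_R, ..., Ǧ_R]_S ⊆ Ĝ_R (one argument from Ĝ_R, the other n−1 from Ǧ_R). -/

import Mathlib

/-- Generalized Jacobi identity for an alternating (m+1)-bracket. -/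
def GJI {K G : Type*} [CommRing K] [AddCommGroup G] [Module K G] {m : ℕ}
    (B : AlternatingMap K G G (Fin (m + 1))) : Prop :=
  ∀ x : Fin (2 * m + 1) → G,
    ∑ σ : Equiv.Perm (Fin (2 * m + 1)), (Equiv.Perm.sign σ : ℤ) •
      B (Fin.cons (B fun j => x (σ (Fin.castLE (by omega) j)))
        (fun j : Fin m => x (σ ⟨m + 1 + j.1, by have := j.isLt; omega⟩))) = 0

/-- n-fold product in a (possibly non-unital) multiplicative structure. -/
def sprod {S : Type*} [Mul S] {m : ℕ} (l : Fin (m + 1) → S) : S :=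
  (List.ofFn fun j : Fin m => l j.succ).foldl (· * ·) (l 0)

/-- The generator `λ ⊗ x` of the S-expanded module `S ⊗ G` (modelled as the free
module `S →₀ G` on the semigroup S with coefficients in G). -/
noncomputable def gen {S G : Type*} [AddCommGroup G] (lam : S) (x : G) : S →₀ G :=
  Finsupp.single lam x

/-! The expanded bracket is multilinear, so it suffices to evaluate it on generators
`λ_k ⊗ v_k` with `λ_0 ∈ Ŝ_{p_0}`, `v_0 ∈ V_{p_0}` and `λ_k ∈ Š_{p_k}`, `v_k ∈ V_{p_k}` for `k ≠ 0`.
There it equals `(λ_0 ⋯ λ_m) ⊗ [v_0, …, v_m]`: the bracket lies in `⨁_{r ∈ i_p} V_r`, and the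
product lies in `Ŝ_r` for every `r ∈ i_p`, so the result lies in `⨁_{r ∈ i_p} Ŝ_r ⊗ V_r ⊆ Ĝ_R`. -/

theorem MultilinearMap.map_mem_of_forall_mem_span {R ι N : Type*} {M : ι → Type*}
    [CommSemiring R] [∀ i, AddCommMonoid (M i)] [∀ i, Module R (M i)] [AddCommMonoid N]
    [Module R N] [Finite ι] (f : MultilinearMap R M N) {s : ∀ i, Set (M i)}
    {T : Submodule R N} (h : ∀ x, (∀ i, x i ∈ s i) → f x ∈ T) {x : ∀ i, M i}
    (hx : ∀ i, x i ∈ Submodule.span R (s i)) : f x ∈ T := by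
  classical
  cases nonempty_fintype ι
  suffices key : ∀ t : Finset ι, ∀ x : ∀ i, M i, (∀ i ∈ t, x i ∈ Submodule.span R (s i)) →
      (∀ i ∉ t, x i ∈ s i) → f x ∈ T from
    key Finset.univ x (fun i _ => hx i) fun i hi => absurd (Finset.mem_univ i) hi
  intro t
  induction t using Finset.induction_on with
  | empty => exact fun x _ hs => h x fun i => hs i (Finset.notMem_empty i)
  | insert a t ha ih =>
    intro x hspan hs
    have hsa : s a ⊆ T.comap (f.toLinearMap x a) := by
      intro y hy
      refine ih _ (fun i hi => ?_) fun i hi => ?_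
      · rw [Function.update_of_ne (ne_of_mem_of_not_mem hi ha)]
        exact hspan i (Finset.mem_insert_of_mem hi)
      · rcases eq_or_ne i a with rfl | hia
        · simpa using hy
        · rw [Function.update_of_ne hia]
          exact hs i (by simp [hia, hi])
    simpa using Submodule.span_le.mpr hsa (hspan a (Finset.mem_insert_self a t))

section ExpandedSubspace

variable {K G S I : Type*} [Semiring K] [AddCommGroup G] [Module K G]

variable (K) in
/-- The subspace `⨁_q A_q ⊗ V_q` of `S ⊗ G`; `Ĝ_R` for `A = Ŝ` and `Ǧ_R` for `A = Š`. -/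
noncomputable def expandedSubspace (V : I → Submodule K G) (A : I → Set S) :
    Submodule K (S →₀ G) :=
  ⨆ q, Submodule.span K {e | ∃ lam ∈ A q, ∃ v ∈ V q, e = gen lam v}

theorem expandedSubspace_eq_span (V : I → Submodule K G) (A : I → Set S) :
    expandedSubspace K V A =
      Submodule.span K {e | ∃ q, ∃ lam ∈ A q, ∃ v ∈ V q, e = gen lam v} := by
  rw [expandedSubspace, ← Submodule.span_iUnion]
  congr 1
  ext e
  simp only [Set.mem_iUnion, Set.mem_ofPred_eq]

theorem gen_mem_expandedSubspace {V : I → Submodule K G} {A : I → Set S} {J : Set I}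
    {lam : S} (hlam : ∀ r ∈ J, lam ∈ A r) {v : G} (hv : v ∈ ⨆ r ∈ J, V r) :
    gen lam v ∈ expandedSubspace K V A := by
  suffices ⨆ r ∈ J, V r ≤ (expandedSubspace K V A).comap (Finsupp.lsingle lam) from this hv
  refine iSup₂_le fun r hr w hw => ?_
  exact Submodule.mem_iSup_of_mem r (Submodule.subset_span ⟨lam, hlam r hr, w, hw, rfl⟩)

end ExpandedSubspace

theorem reduced_of_resonant_general {K G S I : Type*} [Field K] [AddCommGroup G] [Module K G]
    [CommSemigroup S] (m : ℕ)
    (B : AlternatingMap K G G (Fin (m + 1)))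
    (V : I → Submodule K G) (ind : (Fin (m + 1) → I) → Set I)
    (hstruct : ∀ (p : Fin (m + 1) → I) (x : Fin (m + 1) → G),
      (∀ k, x k ∈ V (p k)) → B x ∈ ⨆ r ∈ ind p, V r)
    (Shat Scheck : I → Set S)
    (hresp : ∀ (p : Fin (m + 1) → I) (lam : Fin (m + 1) → S),
      lam 0 ∈ Shat (p 0) → (∀ k, k ≠ 0 → lam k ∈ Scheck (p k)) →
      sprod lam ∈ ⋂ r ∈ ind p, Shat r)
    (Bexp : AlternatingMap K (S →₀ G) (S →₀ G) (Fin (m + 1)))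
    (hBexp : ∀ (lam : Fin (m + 1) → S) (x : Fin (m + 1) → G),
      Bexp (fun k => gen (lam k) (x k)) = gen (sprod lam) (B x)) :
    ∀ x : Fin (m + 1) → (S →₀ G),
      (x 0 ∈ ⨆ q, Submodule.span K
        {e | ∃ lam ∈ Shat q, ∃ v ∈ V q, e = gen lam v}) →
      (∀ k, k ≠ 0 → x k ∈ ⨆ q, Submodule.span K
        {e | ∃ lam ∈ Scheck q, ∃ v ∈ V q, e = gen lam v}) →
      Bexp x ∈ ⨆ q, Submodule.span K
        {e | ∃ lam ∈ Shat q, ∃ v ∈ V q, e = gen lam v} := by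
  intro x (hx0 : x 0 ∈ expandedSubspace K V Shat)
    (hxk : ∀ k, k ≠ 0 → x k ∈ expandedSubspace K V Scheck)
  show Bexp x ∈ expandedSubspace K V Shat
  let A : Fin (m + 1) → I → Set S := fun k => if k = 0 then Shat else Scheck
  refine Bexp.toMultilinearMap.map_mem_of_forall_mem_span
    (s := fun k => {e | ∃ q, ∃ lam ∈ A k q, ∃ v ∈ V q, e = gen lam v}) ?_ fun k => ?_
  · intro y hy
    choose p lam hlam v hv hy using hy
    obtain rfl : y = fun k => gen (lam k) (v k) := funext hy
    have hlam0 : lam 0 ∈ Shat (p 0) := by simpa [A] using hlam 0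
    have hlamk : ∀ k, k ≠ 0 → lam k ∈ Scheck (p k) := fun k hk => by simpa [A, hk] using hlam k
    rw [AlternatingMap.coe_multilinearMap, hBexp]
    exact gen_mem_expandedSubspace (by simpa using hresp p lam hlam0 hlamk) (hstruct p v hv)
  · rw [← expandedSubspace_eq_span]
    rcases eq_or_ne k 0 with rfl | hk
    · simpa [A] using hx0
    · simpa [A, hk] using hxk k hk

/-- given a resonant decomposition and partitions `S_p = Ŝ_p ∪ Š_p`
with `Ŝ_{p_1}·Š_{p_2}⋯Š_{p_n} ⊆ ∩_{r∈i_(p)} Ŝ_r`, the S-expanded bracket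
satisfies `[Ĝ_R, Ǧ_R, ..., Ǧ_R]_S ⊆ Ĝ_R`. -/
theorem reduced_of_resonant {K G S I : Type*} [Field K] [AddCommGroup G] [Module K G]
    [CommSemigroup S] (m : ℕ) (hn : Even (m + 1))
    (B : AlternatingMap K G G (Fin (m + 1))) (hB : GJI B)
    (V : I → Submodule K G) (ind : (Fin (m + 1) → I) → Set I)
    (hstruct : ∀ (p : Fin (m + 1) → I) (x : Fin (m + 1) → G),
      (∀ k, x k ∈ V (p k)) → B x ∈ ⨆ r ∈ ind p, V r)
    (Sp Shat Scheck : I → Set S)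
    (hres : ∀ (p : Fin (m + 1) → I) (lam : Fin (m + 1) → S),
      (∀ k, lam k ∈ Sp (p k)) → sprod lam ∈ ⋂ r ∈ ind p, Sp r)
    (hpart : ∀ p, Sp p = Shat p ∪ Scheck p)
    (hdisj : ∀ p, Shat p ∩ Scheck p = ∅)
    (hresp : ∀ (p : Fin (m + 1) → I) (lam : Fin (m + 1) → S),
      lam 0 ∈ Shat (p 0) → (∀ k, k ≠ 0 → lam k ∈ Scheck (p k)) →
      sprod lam ∈ ⋂ r ∈ ind p, Shat r)
    (Bexp : AlternatingMap K (S →₀ G) (S →₀ G) (Fin (m + 1)))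
    (hBexp : ∀ (lam : Fin (m + 1) → S) (x : Fin (m + 1) → G),
      Bexp (fun k => gen (lam k) (x k)) = gen (sprod lam) (B x)) :
    ∀ x : Fin (m + 1) → (S →₀ G),
      (x 0 ∈ ⨆ q, Submodule.span K
        {e | ∃ lam ∈ Shat q, ∃ v ∈ V q, e = gen lam v}) →
      (∀ k, k ≠ 0 → x k ∈ ⨆ q, Submodule.span K
        {e | ∃ lam ∈ Scheck q, ∃ v ∈ V q, e = gen lam v}) →
      Bexp x ∈ ⨆ q, Submodule.span K
        {e | ∃ lam ∈ Shat q, ∃ v ∈ V q, e = gen lam v} :=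
  reduced_of_resonant_general m B V ind hstruct Shat Scheck hresp Bexp hBexp
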